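/- Let h be a real number with h ≠ −k/2 for every integer k ≥ 0. Then for every integer n ≥ −1 and every polynomial f ∈ ℂ[X], the q_R-conformal symmetries satisfy the commutation relation [L_n, f(D)] = −D^{n+1}∘f'(D) on ℂ[z], where f(D) denotes the operator obtained by substituting D into f (equivalently, [L_n, D^k] = −k·D^{n+k} for all k ≥ 0). -/

import Mathlib

/-! Both sides of the identity are derivations in `f`: `f ↦ [Lₙ, f(D)]` obeys the Leibniz rule,
and so does `f ↦ -D^{n+1} f'(D)` because `D^{n+1}` commutes with `D`. So it suffices to check
`[Lₙ, D] = -D^{n+1}`, a consequence of the Weyl relation `[D, z] = 1`. For `n = -1` one first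
identifies `L₋₁` with multiplication by `z`; this is where `2h + n ≠ 0` enters. -/

open Polynomial

noncomputable section

/-- Operators (ℂ-linear endomorphisms) on ℂ[z], realized as `Polynomial ℂ`. -/
abbrev E : Type := Module.End ℂ (Polynomial ℂ)

/-- The differentiation operator `D(p) = p'`. -/
def Dop : E := Polynomial.derivative

/-- Multiplication by `z`. -/
def Mz : E := LinearMap.mulLeft ℂ (X : Polynomial ℂ)

/-- `l₋₁(p) = z·p`. -/
def lm1 : E := Mz

/-- `l₀(p) = z·p' + h·p`. -/
def l0 (h : ℝ) : E := Mz * Dop + (h : ℂ) • (1 : E)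

/-- `l₁(p) = z·p'' + 2h·p'`. -/
def l1 (h : ℝ) : E := Mz * Dop ^ 2 + ((2 * h : ℝ) : ℂ) • Dop

/-- Commutator `[A,B] = A∘B − B∘A`. -/
def opComm (A B : E) : E := A * B - B * A

/-- The weight `w h n = n!·(2h)(2h+1)⋯(2h+n−1)`, i.e. the squared norm `⟨zⁿ, zⁿ⟩`
in the unitarizable Verma module. -/
def w (h : ℝ) (n : ℕ) : ℝ := (n.factorial : ℝ) * ∏ i ∈ Finset.range n, (2 * h + (i : ℝ))

section Commutator

variable {R S : Type*} [CommRing R] [Ring S] [Algebra R S]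

theorem commutator_aeval {A d c : S} (hdc : Commute d c) (hA : A * d - d * A = c) (p : R[X]) :
    A * aeval d p - aeval d p * A = c * aeval d (derivative p) := by
  induction p using Polynomial.induction_on with
  | C a => simp [Algebra.commutes]
  | add p q hp hq =>
    simp only [map_add, mul_add, add_mul, ← hp, ← hq]
    abel
  | monomial n a ih =>
    rw [show (C a * X ^ (n + 1) : R[X]) = X * (C a * X ^ n) by ring]
    generalize C a * X ^ n = q at ih ⊢
    rw [derivative_mul, derivative_X, one_mul, map_mul, map_add, map_mul, aeval_X]
    generalize aeval d q = P at ih ⊢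
    have hLeibniz : A * (d * P) - d * P * A = (A * d - d * A) * P + d * (A * P - P * A) := by
      noncomm_ring
    rw [hLeibniz, hA, ih, ← mul_assoc, hdc.eq, mul_assoc, mul_add]

theorem mul_pow_commutator_of_mul_eq_mul_add_one {x d : S} (hdx : d * x = x * d + 1) (m : ℕ) :
    x * d ^ m * d - d * (x * d ^ m) = -d ^ m := by
  rw [mul_assoc, ← pow_succ, ← mul_assoc, hdx, add_mul, one_mul, mul_assoc, ← pow_succ',
    sub_add_cancel_left]

end Commutator

theorem Dop_mul_Mz : Dop * Mz = Mz * Dop + 1 := by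
  refine LinearMap.ext fun p => ?_
  simp [Dop, Mz, add_comm]

theorem eq_Mz_of_apply_X_pow {T : E} (hT : ∀ n : ℕ, T (X ^ n) = X ^ (n + 1)) : T = Mz := by
  refine (basisMonomials ℂ).ext fun n => ?_
  simp [coe_basisMonomials, monomial_one_right_eq_X_pow, hT, Mz, pow_succ']

theorem natCast_add_two_mul_ne_zero {h : ℝ} (hh : ∀ k : ℕ, h ≠ -(k : ℝ) / 2) (n : ℕ) :
    (n : ℂ) + 2 * h ≠ 0 := by
  have : (n : ℝ) + 2 * h ≠ 0 := fun h0 => hh n (by linarith)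
  exact_mod_cast this

/-- For nondegenerate extremal weight `h`, for every `n ≥ −1` (written
`n = m − 1`, `m ∈ ℕ`) and every polynomial `f`, `[Lₙ, f(D)] = −D^{n+1}∘f'(D)`. -/
theorem stmt_9 (h : ℝ) (hh : ∀ k : ℕ, h ≠ -(k : ℝ) / 2)
    (L : ℤ → E)
    (hLpos : ∀ k : ℕ, L (k : ℤ) = Mz * Dop ^ (k + 1) + (((k : ℂ) + 1) * (h : ℂ)) • Dop ^ k)
    (hLneg : ∀ k : ℕ, 1 ≤ k → ∀ n : ℕ,
      L (-(k : ℤ)) (X ^ n) =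
        (((n : ℂ) + ((k : ℂ) + 1) * (h : ℂ)) /
            ∏ i ∈ Finset.range k, ((n : ℂ) + 2 * h + (i : ℂ))) • X ^ (n + k))
    :
    ∀ m : ℕ, ∀ f : Polynomial ℂ,
      opComm (L ((m : ℤ) - 1)) (Polynomial.aeval Dop f) =
        -(Dop ^ m * Polynomial.aeval Dop (derivative f)) := by
  have hL_neg_one : L (-1) = Mz := by
    refine eq_Mz_of_apply_X_pow fun n => ?_
    have hLn := hLneg 1 le_rfl n
    simp only [Finset.prod_range_one, Nat.cast_zero, add_zero, Nat.cast_one,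
      one_add_one_eq_two] at hLn
    rwa [div_self (natCast_add_two_mul_ne_zero hh n), one_smul] at hLn
  have hL_comm_Dop : ∀ m : ℕ, L (m - 1) * Dop - Dop * L (m - 1) = -Dop ^ m := by
    rintro (_ | k)
    · simpa [hL_neg_one] using mul_pow_commutator_of_mul_eq_mul_add_one Dop_mul_Mz 0
    · rw [Nat.cast_succ, add_sub_cancel_right, hLpos k, add_mul, mul_add, add_sub_add_comm,
        mul_pow_commutator_of_mul_eq_mul_add_one Dop_mul_Mz, smul_mul_assoc, mul_smul_comm,
        ← pow_succ, ← pow_succ', sub_self, add_zero]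
  intro m f
  rw [opComm, commutator_aeval ((Commute.refl Dop).pow_right m).neg_right (hL_comm_Dop m) f,
    neg_mul]

end
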